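/- Let ν_t, φ_t be smooth functions on [0,T] × ℝ^d with ν_t > 0, and let D_t be a symmetric matrix (constant in x). Suppose ν satisfies the Fokker–Planck equation ∂_t ν_t = -∇·(b_t ν_t) + (1/2)∇·(D_t ∇ν_t) and φ satisfies the HJB equation ∂_t φ_t = -b_t·∇φ_t - (1/2)∇φ_t·D_t∇φ_t - (1/2)∇·(D_t∇φ_t). Then μ_t := e^{φ_t} ν_t satisfies the controlled Fokker–Planck equation ∂_t μ_t = -∇·(b_t μ_t) - ∇·(D_t ∇φ_t μ_t) + (1/2)∇·(D_t ∇μ_t). -/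

import Mathlib

open Matrix Real Set

/-- Partial derivative in coordinate direction `i`. -/
noncomputable def grad {d : ℕ} (f : (Fin d → ℝ) → ℝ) (x : Fin d → ℝ) : Fin d → ℝ :=
  fun i => fderiv ℝ f x (Pi.single i 1)

/-- Divergence of a vector field on `ℝ^d`. -/
noncomputable def dvg {d : ℕ} (F : (Fin d → ℝ) → (Fin d → ℝ)) (x : Fin d → ℝ) : ℝ :=
  ∑ i, fderiv ℝ (fun y => F y i) x (Pi.single i 1)


lemma grad_mul {d : ℕ} {f g : (Fin d → ℝ) → ℝ} {x : Fin d → ℝ}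
    (hf : DifferentiableAt ℝ f x) (hg : DifferentiableAt ℝ g x) (i : Fin d) :
    grad (fun y => f y * g y) x i = f x * grad g x i + g x * grad f x i := by
  simp [grad, fderiv_fun_mul hf hg]

lemma grad_exp {d : ℕ} {f : (Fin d → ℝ) → ℝ} {x : Fin d → ℝ}
    (hf : DifferentiableAt ℝ f x) (i : Fin d) :
    grad (fun y => Real.exp (f y)) x i = Real.exp (f x) * grad f x i := by
  simp [grad, (hf.hasFDerivAt.exp).fderiv]

lemma dvg_smul {d : ℕ} {f : (Fin d → ℝ) → ℝ} {F : (Fin d → ℝ) → (Fin d → ℝ)} {x : Fin d → ℝ}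
    (hf : DifferentiableAt ℝ f x) (hF : ∀ i, DifferentiableAt ℝ (fun y => F y i) x) :
    dvg (fun y => f y • F y) x = grad f x ⬝ᵥ F x + f x * dvg F x := by
  simp only [dvg, Pi.smul_apply, smul_eq_mul]
  have : ∀ i : Fin d, fderiv ℝ (fun y => f y * F y i) x (Pi.single i 1)
      = f x * fderiv ℝ (fun y => F y i) x (Pi.single i 1) + grad f x i * F x i := by
    intro i
    rw [fderiv_fun_mul hf (hF i)]
    simp [grad, mul_comm]
  simp only [this, Finset.sum_add_distrib, ← Finset.mul_sum, dotProduct]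
  ring

lemma dvg_add {d : ℕ} {F G : (Fin d → ℝ) → (Fin d → ℝ)} {x : Fin d → ℝ}
    (hF : ∀ i, DifferentiableAt ℝ (fun y => F y i) x)
    (hG : ∀ i, DifferentiableAt ℝ (fun y => G y i) x) :
    dvg (fun y => F y + G y) x = dvg F x + dvg G x := by
  simp only [dvg, Pi.add_apply]
  rw [← Finset.sum_add_distrib]
  congr 1; funext i
  rw [fderiv_fun_add (hF i) (hG i)]; simp

/-- If `ν` solves the Fokker–Planck equation and `φ` solves the HJB equation, then
`μ_t = e^{φ_t} ν_t` solves the controlled Fokker–Planck equation. -/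
theorem tilted_density_solves_controlled_FokkerPlanck
    {d : ℕ} (T : ℝ) (hT : 0 < T)
    (ν φ : ℝ → (Fin d → ℝ) → ℝ)
    (b : ℝ → (Fin d → ℝ) → (Fin d → ℝ))
    (D : ℝ → Matrix (Fin d) (Fin d) ℝ)
    (hν_smooth : ContDiff ℝ (⊤ : ℕ∞) (fun p : ℝ × (Fin d → ℝ) => ν p.1 p.2))
    (hφ_smooth : ContDiff ℝ (⊤ : ℕ∞) (fun p : ℝ × (Fin d → ℝ) => φ p.1 p.2))
    (hb_smooth : ContDiff ℝ (⊤ : ℕ∞) (fun p : ℝ × (Fin d → ℝ) => b p.1 p.2))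
    (hν_pos : ∀ t x, 0 < ν t x)
    (hD_symm : ∀ t, (D t).IsSymm)
    -- Fokker–Planck equation for ν:
    (hFP : ∀ t ∈ Icc (0:ℝ) T, ∀ x, deriv (fun s => ν s x) t =
      - dvg (fun y => ν t y • b t y) x
        + (1/2) * dvg (fun y => (D t).mulVec (grad (ν t) y)) x)
    -- HJB equation for φ:
    (hHJB : ∀ t ∈ Icc (0:ℝ) T, ∀ x, deriv (fun s => φ s x) t =
      - (b t x ⬝ᵥ grad (φ t) x)
        - (1/2) * (grad (φ t) x ⬝ᵥ (D t).mulVec (grad (φ t) x))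
        - (1/2) * dvg (fun y => (D t).mulVec (grad (φ t) y)) x) :
    -- Controlled Fokker–Planck equation for μ_t = e^{φ_t} ν_t:
    ∀ t ∈ Icc (0:ℝ) T, ∀ x,
      deriv (fun s => Real.exp (φ s x) * ν s x) t =
        - dvg (fun y => (Real.exp (φ t y) * ν t y) • b t y) x
          - dvg (fun y => (Real.exp (φ t y) * ν t y) • (D t).mulVec (grad (φ t) y)) x
          + (1/2) * dvg (fun y =>
              (D t).mulVec (grad (fun z => Real.exp (φ t z) * ν t z) y)) x := by
  intro t ht x
  -- spatial smoothness at fixed t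
  have hslice : ContDiff ℝ (⊤ : ℕ∞) (fun y : Fin d → ℝ => (t, y)) :=
    (contDiff_const.prodMk contDiff_id)
  have hφx : ContDiff ℝ (⊤ : ℕ∞) (φ t) := hφ_smooth.comp hslice
  have hνx : ContDiff ℝ (⊤ : ℕ∞) (ν t) := hν_smooth.comp hslice
  have hbx : ContDiff ℝ (⊤ : ℕ∞) (fun y => b t y) := hb_smooth.comp hslice
  have hφd : Differentiable ℝ (φ t) := hφx.differentiable (by simp)
  have hνd : Differentiable ℝ (ν t) := hνx.differentiable (by simp)
  have hbd : ∀ i, Differentiable ℝ (fun y => b t y i) :=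
    differentiable_pi.mp (hbx.differentiable (by simp))
  have hgφ : ∀ i, Differentiable ℝ (fun y => grad (φ t) y i) := by
    intro i
    have hf : ContDiff ℝ (⊤ : ℕ∞) (fderiv ℝ (φ t)) := hφx.fderiv_right (by simp)
    exact (hf.differentiable (by simp)).clm_apply (differentiable_const _)
  have hgν : ∀ i, Differentiable ℝ (fun y => grad (ν t) y i) := by
    intro i
    have hf : ContDiff ℝ (⊤ : ℕ∞) (fderiv ℝ (ν t)) := hνx.fderiv_right (by simp)
    exact (hf.differentiable (by simp)).clm_apply (differentiable_const _)
  have hDφd : ∀ i, Differentiable ℝ (fun y => (D t).mulVec (grad (φ t) y) i) := by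
    intro i
    have : (fun y => (D t).mulVec (grad (φ t) y) i)
        = fun y => ∑ j, D t i j * grad (φ t) y j := by
      funext y; simp [Matrix.mulVec, dotProduct]
    rw [this]
    exact Differentiable.fun_sum fun j _ => (hgφ j).const_mul _
  have hDνd : ∀ i, Differentiable ℝ (fun y => (D t).mulVec (grad (ν t) y) i) := by
    intro i
    have : (fun y => (D t).mulVec (grad (ν t) y) i)
        = fun y => ∑ j, D t i j * grad (ν t) y j := by
      funext y; simp [Matrix.mulVec, dotProduct]
    rw [this]
    exact Differentiable.fun_sum fun j _ => (hgν j).const_mul _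
  have hμd : Differentiable ℝ (fun y => Real.exp (φ t y) * ν t y) :=
    (hφd.exp).mul hνd
  have hEd : Differentiable ℝ (fun y => Real.exp (φ t y)) := hφd.exp
  -- time derivative
  have hslice' : ContDiff ℝ (⊤ : ℕ∞) (fun s : ℝ => (s, x)) := (contDiff_id.prodMk contDiff_const)
  have hφt : DifferentiableAt ℝ (fun s => φ s x) t :=
    ((hφ_smooth.comp hslice').differentiable (by simp)) t
  have hνt : DifferentiableAt ℝ (fun s => ν s x) t :=
    ((hν_smooth.comp hslice').differentiable (by simp)) t
  have h1 : HasDerivAt (fun s => Real.exp (φ s x) * ν s x)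
      (Real.exp (φ t x) * deriv (fun s => φ s x) t * ν t x
        + Real.exp (φ t x) * deriv (fun s => ν s x) t) t :=
    (hφt.hasDerivAt.exp).mul hνt.hasDerivAt
  rw [h1.deriv, hFP t ht x, hHJB t ht x]
  -- gradient of μ
  have hgradμ : ∀ y, grad (fun z => Real.exp (φ t z) * ν t z) y
      = (Real.exp (φ t y) * ν t y) • grad (φ t) y + Real.exp (φ t y) • grad (ν t) y := by
    intro y; funext i
    rw [grad_mul (hEd y) (hνd y) i, grad_exp (hφd y) i]
    simp; ring
  -- expand the three divergences on the RHS
  have hdvg1 : dvg (fun y => (Real.exp (φ t y) * ν t y) • b t y) x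
      = grad (fun z => Real.exp (φ t z) * ν t z) x ⬝ᵥ b t x
        + (Real.exp (φ t x) * ν t x) * dvg (b t) x :=
    dvg_smul (hμd x) (fun i => (hbd i) x)
  have hdvg2 : dvg (fun y => (Real.exp (φ t y) * ν t y) • (D t).mulVec (grad (φ t) y)) x
      = grad (fun z => Real.exp (φ t z) * ν t z) x ⬝ᵥ (D t).mulVec (grad (φ t) x)
        + (Real.exp (φ t x) * ν t x) * dvg (fun y => (D t).mulVec (grad (φ t) y)) x :=
    dvg_smul (hμd x) (fun i => (hDφd i) x)
  have hfun3 : (fun y => (D t).mulVec (grad (fun z => Real.exp (φ t z) * ν t z) y))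
      = fun y => (Real.exp (φ t y) * ν t y) • (D t).mulVec (grad (φ t) y)
          + Real.exp (φ t y) • (D t).mulVec (grad (ν t) y) := by
    funext y
    rw [hgradμ y, Matrix.mulVec_add, Matrix.mulVec_smul, Matrix.mulVec_smul]
  have hdvg3 : dvg (fun y => (D t).mulVec (grad (fun z => Real.exp (φ t z) * ν t z) y)) x
      = (grad (fun z => Real.exp (φ t z) * ν t z) x ⬝ᵥ (D t).mulVec (grad (φ t) x)
          + (Real.exp (φ t x) * ν t x) * dvg (fun y => (D t).mulVec (grad (φ t) y)) x)
        + (grad (fun z => Real.exp (φ t z)) x ⬝ᵥ (D t).mulVec (grad (ν t) x)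
          + Real.exp (φ t x) * dvg (fun y => (D t).mulVec (grad (ν t) y)) x) := by
    rw [hfun3]
    rw [dvg_add (F := fun y => (Real.exp (φ t y) * ν t y) • (D t).mulVec (grad (φ t) y))
        (G := fun y => Real.exp (φ t y) • (D t).mulVec (grad (ν t) y))
        (fun i => ((hμd.mul (hDφd i)) x))
        (fun i => ((hEd.mul (hDνd i)) x))]
    rw [dvg_smul (hμd x) (fun i => (hDφd i) x), dvg_smul (hEd x) (fun i => (hDνd i) x)]
  -- expand FP divergence
  have hdvgFP : dvg (fun y => ν t y • b t y) x
      = grad (ν t) x ⬝ᵥ b t x + ν t x * dvg (b t) x :=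
    dvg_smul (hνd x) (fun i => (hbd i) x)
  -- gradient of E
  have hgradE : grad (fun z => Real.exp (φ t z)) x = Real.exp (φ t x) • grad (φ t) x := by
    funext i; rw [grad_exp (hφd x) i]; simp
  -- symmetry
  have hsym : grad (ν t) x ⬝ᵥ (D t).mulVec (grad (φ t) x)
      = grad (φ t) x ⬝ᵥ (D t).mulVec (grad (ν t) x) := by
    rw [Matrix.dotProduct_mulVec, ← Matrix.mulVec_transpose, (hD_symm t).eq,
      dotProduct_comm]
  rw [hdvg1, hdvg2, hdvg3, hdvgFP, hgradE, hgradμ x]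
  simp only [add_dotProduct, smul_dotProduct, smul_eq_mul]
  rw [hsym, dotProduct_comm (b t x) (grad (φ t) x)]
  ring
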